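/- Let ℰ be a non-abelian extension of 𝒜 by ℬ with section (𝔰,s), and let 𝒵¹_nab(𝒜,ℬ) be the abelian group of non-abelian 1-cocycles. Then the map λ: Ker K → 𝒵¹_nab(𝒜,ℬ) defined by λ(γ) = (γ₁𝔰 − 𝔰, γ₂s − s) is a group isomorphism, where Ker K = {γ ∈ Aut_ℬ(ℰ) : K(γ) = (id_𝒜, id_ℬ)}. -/
import Mathlib


universe u

section
variable (K : Type u) [Field K]

/-- A relative Rota-Baxter Lie algebra: a Lie algebra `A`, a representation `rep` of `A`
on `V`, and a relative Rota-Baxter operator `T : V → A`. -/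
structure RelRB (A V : Type u) [AddCommGroup A] [Module K A]
    [AddCommGroup V] [Module K V] : Type u where
  br : A →ₗ[K] A →ₗ[K] A
  skew : ∀ x y, br x y + br y x = 0
  jacobi : ∀ x y z, br x (br y z) = br (br x y) z + br y (br x z)
  rep : A →ₗ[K] Module.End K V
  rep_br : ∀ x y, rep (br x y) = rep x * rep y - rep y * rep x
  T : V →ₗ[K] A
  rb : ∀ u v, br (T u) (T v) = T (rep (T u) v - rep (T v) u)

variable {A V B M : Type u}
  [AddCommGroup A] [Module K A] [AddCommGroup V] [Module K V]
  [AddCommGroup B] [Module K B] [AddCommGroup M] [Module K M]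

/-- A non-abelian extension of `𝒜` by `ℬ`: a relative Rota-Baxter Lie algebra `ℰ`
together with a short exact sequence `0 → ℬ → ℰ → 𝒜 → 0` of relative Rota-Baxter Lie
algebras. -/
structure ExtData {Ah Vh : Type u} [AddCommGroup Ah] [Module K Ah]
    [AddCommGroup Vh] [Module K Vh]
    (𝒜 : RelRB K A V) (ℬ : RelRB K B M) (ℰ : RelRB K Ah Vh) : Type u where
  iB : B →ₗ[K] Ah
  iM : M →ₗ[K] Vh
  pA : Ah →ₗ[K] A
  pV : Vh →ₗ[K] V
  iB_br : ∀ a b, iB (ℬ.br a b) = ℰ.br (iB a) (iB b)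
  iB_T : ∀ m, iB (ℬ.T m) = ℰ.T (iM m)
  i_rep : ∀ a m, iM (ℬ.rep a m) = ℰ.rep (iB a) (iM m)
  pA_br : ∀ x y, pA (ℰ.br x y) = 𝒜.br (pA x) (pA y)
  p_T : ∀ vh, pA (ℰ.T vh) = 𝒜.T (pV vh)
  p_rep : ∀ x vh, pV (ℰ.rep x vh) = 𝒜.rep (pA x) (pV vh)
  iB_inj : Function.Injective iB
  iM_inj : Function.Injective iM
  pA_surj : Function.Surjective pA
  pV_surj : Function.Surjective pV
  exactA : ∀ x, pA x = 0 ↔ x ∈ Set.range iB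
  exactV : ∀ v, pV v = 0 ↔ v ∈ Set.range iM
/-- The non-abelian 2-cocycle induced by a section `(sA, sV)` of a non-abelian extension:
`iB (ω x y) = [sA x, sA y] - sA [x,y]`, `iM (ϖ x v) = ρ̂(sA x)(sV v) - sV (ρ(x)v)`,
`iB (χ v) = T̂(sV v) - sA (T v)`, `iM (μ v a) = -ρ̂(iB a)(sV v)`,
`iB (ρB x a) = [sA x, iB a]`, `iM (ρM x m) = ρ̂(sA x)(iM m)`. -/
def InducedCocycle {Ah Vh : Type u} [AddCommGroup Ah] [Module K Ah]
    [AddCommGroup Vh] [Module K Vh]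
    {𝒜 : RelRB K A V} {ℬ : RelRB K B M} {ℰ : RelRB K Ah Vh}
    (E : ExtData K 𝒜 ℬ ℰ) (sA : A →ₗ[K] Ah) (sV : V →ₗ[K] Vh)
    (ω : A → A → B) (ϖ : A → V → M) (χ : V → B)
    (μ : V → B → M) (ρB : A → B → B) (ρM : A → M → M) : Prop :=
  (∀ x y, E.iB (ω x y) = ℰ.br (sA x) (sA y) - sA (𝒜.br x y)) ∧
  (∀ x v, E.iM (ϖ x v) = ℰ.rep (sA x) (sV v) - sV (𝒜.rep x v)) ∧
  (∀ v, E.iB (χ v) = ℰ.T (sV v) - sA (𝒜.T v)) ∧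
  (∀ v a, E.iM (μ v a) = - ℰ.rep (E.iB a) (sV v)) ∧
  (∀ x a, E.iB (ρB x a) = ℰ.br (sA x) (E.iB a)) ∧
  (∀ x m, E.iM (ρM x m) = ℰ.rep (sA x) (E.iM m))
/-- Non-abelian 1-cocycles on `𝒜` with values in `ℬ` (relative to the maps
`μ, ρB, ρM` of the induced non-abelian 2-cocycle). -/
def IsZ1nab (𝒜 : RelRB K A V) (ℬ : RelRB K B M)
    (μ : V → B → M) (ρB : A → B → B) (ρM : A → M → M)
    (ζ : A → B) (η : V → M) : Prop :=
  (∀ x y, ρB y (ζ x) + ζ (𝒜.br x y) = ρB x (ζ y) + ℬ.br (ζ x) (ζ y)) ∧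
  (∀ x a, ℬ.br (ζ x) a = 0) ∧
  (∀ x m, ℬ.rep (ζ x) m = 0) ∧
  (∀ (a : B) v, ℬ.rep a (η v) = 0) ∧
  (∀ x v, ℬ.rep (ζ x) (η v) + ρM x (η v) = η (𝒜.rep x v) + μ v (ζ x)) ∧
  (∀ v, ℬ.T (η v) = ζ (𝒜.T v))

/-- Membership in `Ker K`: an automorphism of `ℰ` preserving `ℬ` which induces the
identity on both `𝒜` and `ℬ`. -/
def InKerK {Ah Vh : Type u} [AddCommGroup Ah] [Module K Ah]
    [AddCommGroup Vh] [Module K Vh]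
    {𝒜 : RelRB K A V} {ℬ : RelRB K B M} {ℰ : RelRB K Ah Vh}
    (E : ExtData K 𝒜 ℬ ℰ) (sA : A →ₗ[K] Ah) (sV : V →ₗ[K] Vh)
    (γ₁ : Ah ≃ₗ[K] Ah) (γ₂ : Vh ≃ₗ[K] Vh) : Prop :=
  (∀ x y, γ₁ (ℰ.br x y) = ℰ.br (γ₁ x) (γ₁ y)) ∧
  (∀ v, γ₁ (ℰ.T v) = ℰ.T (γ₂ v)) ∧
  (∀ x v, γ₂ (ℰ.rep x v) = ℰ.rep (γ₁ x) (γ₂ v)) ∧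
  (∀ a, γ₁ (E.iB a) = E.iB a) ∧ (∀ m, γ₂ (E.iM m) = E.iM m) ∧
  (∀ x, E.pA (γ₁ (sA x)) = x) ∧ (∀ v, E.pV (γ₂ (sV v)) = v)
/-- the map `λ(γ) = (γ₁𝔰 - 𝔰, γ₂s - s)` is a group isomorphism from
`Ker K` onto the group `𝒵¹_nab(𝒜,ℬ)` of non-abelian 1-cocycles: it is well defined,
injective, surjective and multiplicative (composition goes to addition). -/
theorem kerK_iso_Z1nab {Ah Vh : Type u}
    [AddCommGroup Ah] [Module K Ah] [AddCommGroup Vh] [Module K Vh]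
    (𝒜 : RelRB K A V) (ℬ : RelRB K B M) (ℰ : RelRB K Ah Vh)
    (E : ExtData K 𝒜 ℬ ℰ)
    (sA : A →ₗ[K] Ah) (sV : V →ₗ[K] Vh)
    (hsA : ∀ x, E.pA (sA x) = x) (hsV : ∀ v, E.pV (sV v) = v)
    (ω : A → A → B) (ϖ : A → V → M) (χ : V → B)
    (μ : V → B → M) (ρB : A → B → B) (ρM : A → M → M)
    (hcoc : InducedCocycle K E sA sV ω ϖ χ μ ρB ρM) :
    -- λ is well defined: its values are non-abelian 1-cocycles
    (∀ γ₁ γ₂, InKerK K E sA sV γ₁ γ₂ →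
      ∀ (ζ : A →ₗ[K] B) (η : V →ₗ[K] M),
        (∀ x, E.iB (ζ x) = γ₁ (sA x) - sA x) →
        (∀ v, E.iM (η v) = γ₂ (sV v) - sV v) →
        IsZ1nab K 𝒜 ℬ μ ρB ρM (fun x => ζ x) (fun v => η v)) ∧
    -- λ is injective
    (∀ γ₁ γ₂ γ₁' γ₂', InKerK K E sA sV γ₁ γ₂ → InKerK K E sA sV γ₁' γ₂' →
      (∀ x, γ₁ (sA x) = γ₁' (sA x)) → (∀ v, γ₂ (sV v) = γ₂' (sV v)) →
      γ₁ = γ₁' ∧ γ₂ = γ₂') ∧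
    -- λ is surjective
    (∀ (ζ : A →ₗ[K] B) (η : V →ₗ[K] M),
      IsZ1nab K 𝒜 ℬ μ ρB ρM (fun x => ζ x) (fun v => η v) →
      ∃ γ₁ γ₂, InKerK K E sA sV γ₁ γ₂ ∧
        (∀ x, E.iB (ζ x) = γ₁ (sA x) - sA x) ∧
        (∀ v, E.iM (η v) = γ₂ (sV v) - sV v)) ∧
    -- λ is a homomorphism: λ(γ ∘ γ') = λ(γ) + λ(γ')
    (∀ γ₁ γ₂ γ₁' γ₂', InKerK K E sA sV γ₁ γ₂ → InKerK K E sA sV γ₁' γ₂' →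
      ∀ (ζ ζ' : A →ₗ[K] B) (η η' : V →ₗ[K] M),
        (∀ x, E.iB (ζ x) = γ₁ (sA x) - sA x) →
        (∀ x, E.iB (ζ' x) = γ₁' (sA x) - sA x) →
        (∀ v, E.iM (η v) = γ₂ (sV v) - sV v) →
        (∀ v, E.iM (η' v) = γ₂' (sV v) - sV v) →
        (∀ x, E.iB (ζ x + ζ' x) = γ₁ (γ₁' (sA x)) - sA x) ∧
        (∀ v, E.iM (η v + η' v) = γ₂ (γ₂' (sV v)) - sV v)) := by
  obtain ⟨hω, hϖ, hχ, hμ, hρB, hρM⟩ := hcoc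
  have pAiB : ∀ a, E.pA (E.iB a) = 0 := fun a => (E.exactA _).mpr ⟨a, rfl⟩
  have pViM : ∀ m, E.pV (E.iM m) = 0 := fun m => (E.exactV _).mpr ⟨m, rfl⟩
  have skewE : ∀ x y, ℰ.br x y = - ℰ.br y x := by
    intro x y
    have h := ℰ.skew x y
    linear_combination (norm := abel) h
  have skewB : ∀ x y, ℬ.br x y = - ℬ.br y x := by
    intro x y
    have h := ℬ.skew x y
    linear_combination (norm := abel) h
  have decA : ∀ x : Ah, ∃ a, x = E.iB a + sA (E.pA x) := by
    intro x
    obtain ⟨a, ha⟩ := (E.exactA (x - sA (E.pA x))).mp (by rw [map_sub, hsA, sub_self])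
    exact ⟨a, by rw [ha]; abel⟩
  have decV : ∀ w : Vh, ∃ m, w = E.iM m + sV (E.pV w) := by
    intro w
    obtain ⟨m, hm⟩ := (E.exactV (w - sV (E.pV w))).mp (by rw [map_sub, hsV, sub_self])
    exact ⟨m, by rw [hm]; abel⟩
  refine ⟨?_, ?_, ?_, ?_⟩
  · -- well-definedness
    rintro γ₁ γ₂ ⟨hbr, hT, hrep, hiB, hiM, hpA, hpV⟩ ζ η hζ hη
    have hγs : ∀ x, γ₁ (sA x) = sA x + E.iB (ζ x) := by
      intro x; rw [hζ x]; abel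
    have hγv : ∀ v, γ₂ (sV v) = sV v + E.iM (η v) := by
      intro v; rw [hη v]; abel
    refine ⟨?_, ?_, ?_, ?_, ?_, ?_⟩
    · intro x y
      apply E.iB_inj
      have e1 : γ₁ (ℰ.br (sA x) (sA y)) =
          ℰ.br (sA x) (sA y) + E.iB (ρB x (ζ y)) - E.iB (ρB y (ζ x))
            + E.iB (ℬ.br (ζ x) (ζ y)) := by
        rw [hbr, hγs, hγs]
        simp only [map_add, LinearMap.add_apply]
        rw [← hρB x (ζ y), skewE (E.iB (ζ x)) (sA y), ← hρB y (ζ x), ← E.iB_br]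
        abel
      have e2 : γ₁ (ℰ.br (sA x) (sA y)) =
          ℰ.br (sA x) (sA y) + E.iB (ζ (𝒜.br x y)) := by
        have h0 : ℰ.br (sA x) (sA y) = sA (𝒜.br x y) + E.iB (ω x y) := by
          rw [hω]; abel
        calc γ₁ (ℰ.br (sA x) (sA y)) = γ₁ (sA (𝒜.br x y)) + γ₁ (E.iB (ω x y)) := by
              rw [← map_add, ← h0]
          _ = sA (𝒜.br x y) + E.iB (ζ (𝒜.br x y)) + E.iB (ω x y) := by rw [hγs, hiB]
          _ = _ := by rw [h0]; abel
      have h := e1.symm.trans e2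
      rw [map_add, map_add]
      linear_combination (norm := abel) -h
    · intro x a
      apply E.iB_inj
      have e1 : γ₁ (ℰ.br (sA x) (E.iB a)) = ℰ.br (sA x) (E.iB a) := by
        rw [← hρB, hiB]
      have e2 : γ₁ (ℰ.br (sA x) (E.iB a)) =
          ℰ.br (sA x) (E.iB a) + ℰ.br (E.iB (ζ x)) (E.iB a) := by
        rw [hbr, hγs, hiB]
        simp only [map_add, LinearMap.add_apply]
      rw [E.iB_br, map_zero]
      linear_combination (norm := abel) e1 - e2
    · intro x m
      apply E.iM_inj
      have e1 : γ₂ (ℰ.rep (sA x) (E.iM m)) = ℰ.rep (sA x) (E.iM m) := by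
        rw [← hρM, hiM]
      have e2 : γ₂ (ℰ.rep (sA x) (E.iM m)) =
          ℰ.rep (sA x) (E.iM m) + ℰ.rep (E.iB (ζ x)) (E.iM m) := by
        rw [hrep, hγs, hiM]
        simp only [map_add, LinearMap.add_apply]
      rw [E.i_rep, map_zero]
      linear_combination (norm := abel) e1 - e2
    · intro a v
      apply E.iM_inj
      have e1 : γ₂ (ℰ.rep (E.iB a) (sV v)) = ℰ.rep (E.iB a) (sV v) := by
        have h0 : ℰ.rep (E.iB a) (sV v) = - E.iM (μ v a) := by rw [hμ]; abel
        rw [h0, map_neg, hiM]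
      have e2 : γ₂ (ℰ.rep (E.iB a) (sV v)) =
          ℰ.rep (E.iB a) (sV v) + ℰ.rep (E.iB a) (E.iM (η v)) := by
        rw [hrep, hiB, hγv, map_add]
      rw [E.i_rep, map_zero]
      linear_combination (norm := abel) e1 - e2
    · intro x v
      apply E.iM_inj
      have e1 : γ₂ (ℰ.rep (sA x) (sV v)) =
          ℰ.rep (sA x) (sV v) + ℰ.rep (sA x) (E.iM (η v))
            + ℰ.rep (E.iB (ζ x)) (sV v) + ℰ.rep (E.iB (ζ x)) (E.iM (η v)) := by
        rw [hrep, hγs, hγv]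
        simp only [map_add, LinearMap.add_apply]
        abel
      have e2 : γ₂ (ℰ.rep (sA x) (sV v)) =
          ℰ.rep (sA x) (sV v) + E.iM (η (𝒜.rep x v)) := by
        have h0 : ℰ.rep (sA x) (sV v) = sV (𝒜.rep x v) + E.iM (ϖ x v) := by
          rw [hϖ]; abel
        calc γ₂ (ℰ.rep (sA x) (sV v))
            = γ₂ (sV (𝒜.rep x v)) + γ₂ (E.iM (ϖ x v)) := by rw [← map_add, ← h0]
          _ = sV (𝒜.rep x v) + E.iM (η (𝒜.rep x v)) + E.iM (ϖ x v) := by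
              rw [hγv, hiM]
          _ = _ := by rw [h0]; abel
      rw [map_add, map_add, E.i_rep, hρM, hμ]
      linear_combination (norm := abel) e2 - e1
    · intro v
      apply E.iB_inj
      have e1 : γ₁ (ℰ.T (sV v)) = ℰ.T (sV v) + E.iB (ℬ.T (η v)) := by
        rw [hT, hγv, map_add, E.iB_T]
      have e2 : γ₁ (ℰ.T (sV v)) = ℰ.T (sV v) + E.iB (ζ (𝒜.T v)) := by
        have h0 : ℰ.T (sV v) = sA (𝒜.T v) + E.iB (χ v) := by rw [hχ]; abel
        calc γ₁ (ℰ.T (sV v)) = γ₁ (sA (𝒜.T v)) + γ₁ (E.iB (χ v)) := by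
              rw [← map_add, ← h0]
          _ = sA (𝒜.T v) + E.iB (ζ (𝒜.T v)) + E.iB (χ v) := by rw [hγs, hiB]
          _ = _ := by rw [h0]; abel
      linear_combination (norm := abel) e2 - e1
  · -- injectivity
    rintro γ₁ γ₂ γ₁' γ₂' ⟨_, _, _, hiB, hiM, _, _⟩ ⟨_, _, _, hiB', hiM', _, _⟩ hA hV
    constructor
    · refine LinearEquiv.ext fun x => ?_
      obtain ⟨a, ha⟩ := decA x
      calc γ₁ x = γ₁ (E.iB a) + γ₁ (sA (E.pA x)) := by rw [← map_add, ← ha]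
        _ = γ₁' (E.iB a) + γ₁' (sA (E.pA x)) := by rw [hiB, hiB', hA]
        _ = γ₁' x := by rw [← map_add, ← ha]
    · refine LinearEquiv.ext fun w => ?_
      obtain ⟨m, hm⟩ := decV w
      calc γ₂ w = γ₂ (E.iM m) + γ₂ (sV (E.pV w)) := by rw [← map_add, ← hm]
        _ = γ₂' (E.iM m) + γ₂' (sV (E.pV w)) := by rw [hiM, hiM', hV]
        _ = γ₂' w := by rw [← map_add, ← hm]
  · -- surjectivity
    rintro ζ η ⟨z1', z2', z3', z4', z5', z6'⟩
    have z1 : ∀ x y, ρB y (ζ x) + ζ (𝒜.br x y) = ρB x (ζ y) + ℬ.br (ζ x) (ζ y) := z1'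
    have z2 : ∀ x a, ℬ.br (ζ x) a = 0 := z2'
    have z3 : ∀ x m, ℬ.rep (ζ x) m = 0 := z3'
    have z4 : ∀ (a : B) v, ℬ.rep a (η v) = 0 := z4'
    have z5 : ∀ x v, ℬ.rep (ζ x) (η v) + ρM x (η v) = η (𝒜.rep x v) + μ v (ζ x) := z5'
    have z6 : ∀ v, ℬ.T (η v) = ζ (𝒜.T v) := z6'
    set f : Ah →ₗ[K] Ah := E.iB ∘ₗ ζ.comp E.pA with hfdef
    set g : Vh →ₗ[K] Vh := E.iM ∘ₗ η.comp E.pV with hgdef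
    have hfap : ∀ x, f x = E.iB (ζ (E.pA x)) := fun x => rfl
    have hgap : ∀ w, g w = E.iM (η (E.pV w)) := fun w => rfl
    have hff : ∀ x, f (f x) = 0 := by
      intro x; rw [hfap, hfap, pAiB, map_zero, map_zero]
    have hgg : ∀ w, g (g w) = 0 := by
      intro w; rw [hgap, hgap, pViM, map_zero, map_zero]
    have hc1 : (LinearMap.id + f) ∘ₗ (LinearMap.id - f) = LinearMap.id := by
      ext x
      simp only [LinearMap.comp_apply, LinearMap.add_apply, LinearMap.sub_apply,
        LinearMap.id_apply, map_sub]
      rw [hff]; abel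
    have hc2 : (LinearMap.id - f) ∘ₗ (LinearMap.id + f) = LinearMap.id := by
      ext x
      simp only [LinearMap.comp_apply, LinearMap.add_apply, LinearMap.sub_apply,
        LinearMap.id_apply, map_add]
      rw [hff]; abel
    have hd1 : (LinearMap.id + g) ∘ₗ (LinearMap.id - g) = LinearMap.id := by
      ext w
      simp only [LinearMap.comp_apply, LinearMap.add_apply, LinearMap.sub_apply,
        LinearMap.id_apply, map_sub]
      rw [hgg]; abel
    have hd2 : (LinearMap.id - g) ∘ₗ (LinearMap.id + g) = LinearMap.id := by
      ext w
      simp only [LinearMap.comp_apply, LinearMap.add_apply, LinearMap.sub_apply,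
        LinearMap.id_apply, map_add]
      rw [hgg]; abel
    set G1 : Ah ≃ₗ[K] Ah :=
      LinearEquiv.ofLinear (LinearMap.id + f) (LinearMap.id - f) hc1 hc2 with hG1
    set G2 : Vh ≃ₗ[K] Vh :=
      LinearEquiv.ofLinear (LinearMap.id + g) (LinearMap.id - g) hd1 hd2 with hG2
    have hγ₁ : ∀ x, G1 x = x + E.iB (ζ (E.pA x)) := fun x => rfl
    have hγ₂ : ∀ w, G2 w = w + E.iM (η (E.pV w)) := fun w => rfl
    refine ⟨G1, G2, ?_, ?_, ?_⟩
    · -- auxiliary computation lemmas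
      have brZero : ∀ (a : B) (d : A), ℬ.br a (ζ d) = 0 := by
        intro a d
        have h := ℬ.skew (ζ d) a
        rw [z2 d a] at h
        simpa using h
      have L1 : ∀ (z : Ah) (d : A), ℰ.br z (E.iB (ζ d)) = E.iB (ρB (E.pA z) (ζ d)) := by
        intro z d
        obtain ⟨a, ha⟩ := decA z
        calc ℰ.br z (E.iB (ζ d))
            = ℰ.br (E.iB a) (E.iB (ζ d)) + ℰ.br (sA (E.pA z)) (E.iB (ζ d)) := by
              conv_lhs => rw [ha]
              simp only [map_add, LinearMap.add_apply]
          _ = E.iB (ρB (E.pA z) (ζ d)) := by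
              rw [← E.iB_br, ← hρB, brZero, map_zero, zero_add]
      have L2 : ∀ (w : Vh) (d : A),
          ℰ.rep (E.iB (ζ d)) w = - E.iM (μ (E.pV w) (ζ d)) := by
        intro w d
        obtain ⟨m, hm⟩ := decV w
        calc ℰ.rep (E.iB (ζ d)) w
            = ℰ.rep (E.iB (ζ d)) (E.iM m) + ℰ.rep (E.iB (ζ d)) (sV (E.pV w)) := by
              conv_lhs => rw [hm]
              rw [map_add]
          _ = - E.iM (μ (E.pV w) (ζ d)) := by
              rw [← E.i_rep, z3, map_zero, zero_add, hμ, neg_neg]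
      have L3 : ∀ (z : Ah) (u : V),
          ℰ.rep z (E.iM (η u)) = E.iM (ρM (E.pA z) (η u)) := by
        intro z u
        obtain ⟨a, ha⟩ := decA z
        calc ℰ.rep z (E.iM (η u))
            = ℰ.rep (E.iB a) (E.iM (η u)) + ℰ.rep (sA (E.pA z)) (E.iM (η u)) := by
              conv_lhs => rw [ha]
              simp only [map_add, LinearMap.add_apply]
          _ = E.iM (ρM (E.pA z) (η u)) := by
              rw [← E.i_rep, z4, map_zero, zero_add, hρM]
      refine ⟨?_, ?_, ?_, ?_, ?_, ?_, ?_⟩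
      · intro x y
        have h := congrArg E.iB (z1 (E.pA x) (E.pA y))
        rw [map_add, map_add] at h
        have hrhs : ℰ.br (x + E.iB (ζ (E.pA x))) (y + E.iB (ζ (E.pA y))) =
            ℰ.br x y + E.iB (ρB (E.pA x) (ζ (E.pA y)))
              - E.iB (ρB (E.pA y) (ζ (E.pA x)))
              + E.iB (ℬ.br (ζ (E.pA x)) (ζ (E.pA y))) := by
          simp only [map_add, LinearMap.add_apply]
          rw [L1 x (E.pA y), skewE (E.iB (ζ (E.pA x))) y, L1 y (E.pA x),
            ← E.iB_br]
          abel
        rw [hγ₁ (ℰ.br x y), hγ₁ x, hγ₁ y, E.pA_br, hrhs]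
        linear_combination (norm := abel) h
      · intro w
        rw [hγ₁, E.p_T, ← z6, E.iB_T, hγ₂, map_add]
      · intro x w
        have h := congrArg E.iM (z5 (E.pA x) (E.pV w))
        rw [map_add, map_add] at h
        have hrhs : ℰ.rep (x + E.iB (ζ (E.pA x))) (w + E.iM (η (E.pV w))) =
            ℰ.rep x w + E.iM (ρM (E.pA x) (η (E.pV w)))
              - E.iM (μ (E.pV w) (ζ (E.pA x)))
              + E.iM (ℬ.rep (ζ (E.pA x)) (η (E.pV w))) := by
          simp only [map_add, LinearMap.add_apply]
          rw [L3 x (E.pV w), L2 w (E.pA x), ← E.i_rep]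
          abel
        rw [hγ₂ (ℰ.rep x w), hγ₁ x, hγ₂ w, E.p_rep, hrhs]
        linear_combination (norm := abel) -h
      · intro a
        rw [hγ₁, pAiB, map_zero, map_zero, add_zero]
      · intro m
        rw [hγ₂, pViM, map_zero, map_zero, add_zero]
      · intro x
        rw [hγ₁, map_add, hsA, pAiB, add_zero]
      · intro v
        rw [hγ₂, map_add, hsV, pViM, add_zero]
    · intro x
      show E.iB (ζ x) = (sA x + E.iB (ζ (E.pA (sA x)))) - sA x
      rw [hsA]; abel
    · intro v
      show E.iM (η v) = (sV v + E.iM (η (E.pV (sV v)))) - sV v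
      rw [hsV]; abel
  · -- homomorphism
    rintro γ₁ γ₂ γ₁' γ₂' ⟨_, _, _, hiB, hiM, _, _⟩ _ ζ ζ' η η' hζ hζ' hη hη'
    constructor
    · intro x
      have h1 : γ₁' (sA x) = sA x + E.iB (ζ' x) := by rw [hζ' x]; abel
      rw [map_add, hζ x, h1, map_add, hiB]
      abel
    · intro v
      have h1 : γ₂' (sV v) = sV v + E.iM (η' v) := by rw [hη' v]; abel
      rw [map_add, hη v, h1, map_add, hiM]
      abel

end
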